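/- For a fuzzy graph G on n vertices, γ_s(G) = γ_snR(G) if and only if G has no strong edges (i.e., G is the empty fuzzy graph on its vertex set, with all vertices isolated in the strong-neighbor sense). -/

import Mathlib

noncomputable section
open scoped Classical
open Finset

/-- A fuzzy graph on a vertex set `V`. -/
structure FuzzyGraph (V : Type*) where
  σ : V → ℝ
  μ : V → V → ℝ
  σ_nonneg : ∀ v, 0 ≤ σ v
  σ_le_one : ∀ v, σ v ≤ 1
  μ_nonneg : ∀ u v, 0 ≤ μ u v
  μ_symm : ∀ u v, μ u v = μ v u
  μ_le : ∀ u v, μ u v ≤ min (σ u) (σ v)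
  μ_irrefl : ∀ v, μ v v = 0

namespace FuzzyGraph

variable {V : Type*} (G : FuzzyGraph V)

/-- The strength of a walk (given as its list of vertices): the minimum
membership value of its edges (1 for walks without edges). -/
def walkStrength (l : List V) : ℝ :=
  ((l.zip l.tail).map fun p => G.μ p.1 p.2).foldr min 1

/-- `l` is a `u`–`v` walk: it starts at `u`, ends at `v`, and consecutive
vertices are joined by edges of positive membership. -/
def IsWalk (u v : V) (l : List V) : Prop :=
  l.head? = some u ∧ l.getLast? = some v ∧ l.Chain' (fun a b => 0 < G.μ a b)

/-- `CONN_G(u,v)`: the maximum strength over all `u`–`v` paths. -/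
def conn (u v : V) : ℝ :=
  sSup {s | ∃ l : List V, G.IsWalk u v l ∧ 2 ≤ l.length ∧ s = G.walkStrength l}

/-- The edge `(u,v)` is strong. -/
def StrongEdge (u v : V) : Prop :=
  0 < G.μ u v ∧ G.μ u v = G.conn u v

/-- `μ_s(u)`: the minimum membership value among strong edges at `u`
(`0` if `u` has no strong neighbor, via `Real.sInf_empty`). -/
def mus (u : V) : ℝ :=
  sInf {x | ∃ v, G.StrongEdge u v ∧ x = G.μ u v}

/-- The strong neighborhood degree `d_SN(v)`. -/
def dSN [Fintype V] (v : V) : ℝ :=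
  ∑ u ∈ Finset.univ.filter (fun u => G.StrongEdge v u), G.σ u

/-- `D` is a strong dominating set. -/
def IsStrongDomSet (D : Finset V) : Prop :=
  ∀ v, v ∉ D → ∃ u ∈ D, G.StrongEdge v u

/-- The weight of a strong dominating set. -/
def domWeight (D : Finset V) : ℝ := ∑ u ∈ D, G.mus u

/-- The strong domination number `γ_s(G)`. -/
def gammaS [Fintype V] : ℝ :=
  sInf {w | ∃ D : Finset V, G.IsStrongDomSet D ∧ w = G.domWeight D}

/-- `f` is a strong-neighbors Roman dominating function (SNRDF). -/
def IsSNRDF (f : V → ℕ) : Prop :=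
  (∀ v, f v ≤ 2) ∧ ∀ v, f v = 0 → ∃ u, G.StrongEdge v u ∧ f u = 2

/-- The weight of an SNRDF. -/
def snrdfWeight [Fintype V] (f : V → ℕ) : ℝ := ∑ v, (f v : ℝ) * G.mus v

/-- The strong-neighbors Roman domination number `γ_snR(G)`. -/
def gammaSnR [Fintype V] : ℝ :=
  sInf {w | ∃ f : V → ℕ, G.IsSNRDF f ∧ w = G.snrdfWeight f}

/-- The fuzzy subgraph induced by the vertices satisfying `p`. -/
def induce (p : V → Prop) : FuzzyGraph {v // p v} where
  σ v := G.σ v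
  μ u v := G.μ u v
  σ_nonneg v := G.σ_nonneg v
  σ_le_one v := G.σ_le_one v
  μ_nonneg u v := G.μ_nonneg u v
  μ_symm u v := G.μ_symm u v
  μ_le u v := G.μ_le u v
  μ_irrefl v := G.μ_irrefl v

/-- The minimum membership value among the strong edges of `G`. -/
def muMin : ℝ := sInf {x | ∃ u v, G.StrongEdge u v ∧ x = G.μ u v}

/-- The complement of a fuzzy graph. -/
def compl : FuzzyGraph V where
  σ := G.σ
  μ u v := if u = v then 0 else min (G.σ u) (G.σ v) - G.μ u v
  σ_nonneg := G.σ_nonneg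
  σ_le_one := G.σ_le_one
  μ_nonneg u v := by
    by_cases h : u = v
    · simp [h]
    · simp only [if_neg h, sub_nonneg]
      exact G.μ_le u v
  μ_symm u v := by
    by_cases h : u = v
    · simp [h]
    · have h' : ¬ v = u := fun hh => h hh.symm
      simp only [if_neg h, if_neg h', min_comm (G.σ u), G.μ_symm u v]
  μ_le u v := by
    by_cases h : u = v
    · subst h
      simp only [if_pos rfl, le_min_iff]
      exact ⟨G.σ_nonneg u, G.σ_nonneg u⟩
    · simp only [if_neg h]
      have := G.μ_nonneg u v
      linarith
  μ_irrefl v := by simp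

end FuzzyGraph

/-!
Reversing a walk preserves its strength, so `CONN_G` and strong edges are symmetric. If `G` has no
strong edges then `μ_s ≡ 0` and every dominating set and every SNRDF has weight `0`. Otherwise let
`m > 0` be the least strong-edge value and `f` an SNRDF. If some vertex `v` with `f v = 2` has a
strong neighbour, the support of `f` is a strong dominating set of weight at most
`w(f) - μ_s(v) ≤ w(f) - m`. If not, no vertex is labelled `0` (its strong neighbour labelled `2`
would have a strong edge back), so `w(f) ≥ Σ μ_s`, while removing an endpoint `a` of a strong edge
from `V` leaves a strong dominating set of weight `Σ μ_s - μ_s(a) ≤ Σ μ_s - m`. Either way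
`γ_s + m ≤ γ_snR`.
-/

namespace FuzzyGraph

variable {V : Type*} (G : FuzzyGraph V)

lemma isChain_reverse_iff (p : ℝ → Prop) (l : List V) :
    l.reverse.IsChain (fun a b => p (G.μ a b)) ↔ l.IsChain (fun a b => p (G.μ a b)) := by
  simp only [List.isChain_reverse, G.μ_symm]

lemma walkStrength_le_one : ∀ l : List V, G.walkStrength l ≤ 1
  | [] | [_] => le_rfl
  | _ :: b :: t => (min_le_right _ _).trans (walkStrength_le_one (b :: t))

lemma le_walkStrength_iff {s : ℝ} (hs : s ≤ 1) :
    ∀ l : List V, s ≤ G.walkStrength l ↔ l.IsChain (fun a b => s ≤ G.μ a b)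
  | [] | [_] => by simpa [walkStrength] using hs
  | a :: b :: t => by
    rw [List.isChain_cons_cons, ← le_walkStrength_iff hs (b :: t)]
    exact le_min_iff

lemma walkStrength_reverse (l : List V) : G.walkStrength l.reverse = G.walkStrength l := by
  have key : ∀ s ≤ 1, s ≤ G.walkStrength l.reverse ↔ s ≤ G.walkStrength l := fun s hs => by
    rw [le_walkStrength_iff G hs, le_walkStrength_iff G hs, isChain_reverse_iff G (s ≤ ·)]
  exact le_antisymm ((key _ (G.walkStrength_le_one _)).1 le_rfl)
    ((key _ (G.walkStrength_le_one _)).2 le_rfl)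

lemma IsWalk.reverse {u v : V} {l : List V} (h : G.IsWalk u v l) : G.IsWalk v u l.reverse :=
  ⟨by rw [List.head?_reverse]; exact h.2.1, by rw [List.getLast?_reverse]; exact h.1,
    (isChain_reverse_iff G (0 < ·) l).2 h.2.2⟩

lemma conn_comm (u v : V) : G.conn u v = G.conn v u := by
  have reverse_mem : ∀ a b : V,
      {s | ∃ l : List V, G.IsWalk a b l ∧ 2 ≤ l.length ∧ s = G.walkStrength l} ⊆
      {s | ∃ l : List V, G.IsWalk b a l ∧ 2 ≤ l.length ∧ s = G.walkStrength l} := by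
    rintro a b s ⟨l, hw, hlen, rfl⟩
    exact ⟨l.reverse, hw.reverse, by simpa using hlen, (G.walkStrength_reverse l).symm⟩
  exact congrArg sSup ((reverse_mem u v).antisymm (reverse_mem v u))

variable {G}

lemma StrongEdge.ne {u v : V} (h : G.StrongEdge u v) : u ≠ v := by
  rintro rfl
  exact (G.μ_irrefl u ▸ h.1).false

lemma StrongEdge.symm {u v : V} (h : G.StrongEdge u v) : G.StrongEdge v u := by
  rw [StrongEdge, G.μ_symm, G.conn_comm]
  exact h

lemma mus_nonneg (u : V) : 0 ≤ G.mus u := by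
  refine Real.sInf_nonneg ?_
  rintro _ ⟨v, -, rfl⟩
  exact G.μ_nonneg u v

lemma mus_eq_zero {u : V} (h : ∀ v, ¬ G.StrongEdge u v) : G.mus u = 0 := by
  have hempty : {x | ∃ v, G.StrongEdge u v ∧ x = G.μ u v} = ∅ := by
    ext x
    simpa using fun v hv _ => h v hv
  rw [mus, hempty, Real.sInf_empty]

lemma domWeight_nonneg (D : Finset V) : 0 ≤ G.domWeight D :=
  Finset.sum_nonneg fun u _ => mus_nonneg u

lemma IsSNRDF.one : G.IsSNRDF fun _ => 1 :=
  ⟨fun _ => by norm_num, fun _ h => absurd h one_ne_zero⟩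

section Finite

variable [Finite V]

lemma exists_strongEdge_mus_eq {u v : V} (h : G.StrongEdge u v) :
    ∃ w, G.StrongEdge u w ∧ G.mus u = G.μ u w := by
  have hne : {x | ∃ w, G.StrongEdge u w ∧ x = G.μ u w}.Nonempty := ⟨_, v, h, rfl⟩
  refine hne.csInf_mem ((Set.finite_range (G.μ u)).subset ?_)
  rintro _ ⟨w, -, rfl⟩
  exact ⟨w, rfl⟩

lemma muMin_pos {u v : V} (h : G.StrongEdge u v) : 0 < G.muMin := by
  have hfin : {x | ∃ a b, G.StrongEdge a b ∧ x = G.μ a b}.Finite := by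
    refine (Set.finite_range fun p : V × V => G.μ p.1 p.2).subset ?_
    rintro _ ⟨a, b, -, rfl⟩
    exact ⟨(a, b), rfl⟩
  have hne : {x | ∃ a b, G.StrongEdge a b ∧ x = G.μ a b}.Nonempty := ⟨_, u, v, h, rfl⟩
  obtain ⟨a, b, hab, hmin⟩ := hne.csInf_mem hfin
  rw [muMin, hmin]
  exact hab.1

lemma muMin_le_mus {u v : V} (h : G.StrongEdge u v) : G.muMin ≤ G.mus u := by
  obtain ⟨w, hw, hmus⟩ := exists_strongEdge_mus_eq h
  rw [hmus]
  refine csInf_le ⟨0, ?_⟩ ⟨u, w, hw, rfl⟩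
  rintro _ ⟨a, b, -, rfl⟩
  exact G.μ_nonneg a b

end Finite

section Domination

variable [Fintype V]

lemma gammaS_le_domWeight {D : Finset V} (hD : G.IsStrongDomSet D) :
    G.gammaS ≤ G.domWeight D := by
  refine csInf_le ⟨0, ?_⟩ ⟨D, hD, rfl⟩
  rintro _ ⟨E, -, rfl⟩
  exact domWeight_nonneg E

lemma isStrongDomSet_univ : G.IsStrongDomSet Finset.univ :=
  fun v hv => absurd (Finset.mem_univ v) hv

lemma StrongEdge.isStrongDomSet_univ_erase {a b : V} (h : G.StrongEdge a b) :
    G.IsStrongDomSet (Finset.univ.erase a) := by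
  intro v hv
  obtain rfl : v = a := by simpa using hv
  exact ⟨b, by simpa using h.ne.symm, h⟩

lemma IsSNRDF.isStrongDomSet_support {f : V → ℕ} (hf : G.IsSNRDF f) :
    G.IsStrongDomSet (Finset.univ.filter (f · ≠ 0)) := by
  intro v hv
  obtain ⟨u, hvu, hu⟩ := hf.2 v (by simpa using hv)
  exact ⟨u, by simp [hu], hvu⟩

lemma domWeight_univ_le_snrdfWeight {f : V → ℕ} (hf : ∀ v, f v ≠ 0) :
    G.domWeight Finset.univ ≤ G.snrdfWeight f := by
  refine Finset.sum_le_sum fun v _ => le_mul_of_one_le_left (mus_nonneg v) ?_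
  exact_mod_cast Nat.one_le_iff_ne_zero.2 (hf v)

/-- A label `2` pays once for membership of the support and once more on top of it. -/
lemma domWeight_support_add_mus_le_snrdfWeight {f : V → ℕ} {v : V} (hv : f v = 2) :
    G.domWeight (Finset.univ.filter (f · ≠ 0)) + G.mus v ≤ G.snrdfWeight f := by
  have hsingle : G.mus v = ∑ u, if u = v then G.mus u else 0 := by simp
  rw [domWeight, Finset.sum_filter, hsingle, ← Finset.sum_add_distrib]
  refine Finset.sum_le_sum fun u _ => ?_
  have hmus := mus_nonneg (G := G) u
  split_ifs with hu huv huv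
  · subst huv; rw [hv]; push_cast; linarith
  · have hfu : (1 : ℝ) ≤ f u := by exact_mod_cast Nat.one_le_iff_ne_zero.2 hu
    nlinarith
  · subst huv; simp [hv] at hu
  · simpa using mul_nonneg (Nat.cast_nonneg (f u)) hmus

lemma gammaS_add_muMin_le_snrdfWeight {a b : V} (hab : G.StrongEdge a b) {f : V → ℕ}
    (hf : G.IsSNRDF f) : G.gammaS + G.muMin ≤ G.snrdfWeight f := by
  by_cases hcase : ∃ v, f v = 2 ∧ ∃ w, G.StrongEdge v w
  · obtain ⟨v, hv, w, hvw⟩ := hcase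
    linarith [gammaS_le_domWeight hf.isStrongDomSet_support, muMin_le_mus hvw,
      domWeight_support_add_mus_le_snrdfWeight (G := G) hv]
  · push Not at hcase
    have hf_ne_zero : ∀ v, f v ≠ 0 := fun v hv => by
      obtain ⟨u, hvu, hu⟩ := hf.2 v hv
      exact hcase u hu v hvu.symm
    have herase : G.domWeight (Finset.univ.erase a) + G.mus a = G.domWeight Finset.univ :=
      Finset.sum_erase_add _ _ (Finset.mem_univ a)
    linarith [gammaS_le_domWeight hab.isStrongDomSet_univ_erase, muMin_le_mus hab,
      domWeight_univ_le_snrdfWeight (G := G) hf_ne_zero]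

lemma gammaS_lt_gammaSnR {a b : V} (hab : G.StrongEdge a b) : G.gammaS < G.gammaSnR := by
  have hle : G.gammaS + G.muMin ≤ G.gammaSnR := by
    refine le_csInf ⟨_, _, IsSNRDF.one, rfl⟩ ?_
    rintro _ ⟨f, hf, rfl⟩
    exact gammaS_add_muMin_le_snrdfWeight hab hf
  linarith [muMin_pos hab]

lemma gammaS_eq_zero (h : ∀ u v, ¬ G.StrongEdge u v) : G.gammaS = 0 := by
  have hweight : ∀ D, G.domWeight D = 0 := fun D =>
    Finset.sum_eq_zero fun u _ => mus_eq_zero (h u)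
  have hset : {w | ∃ D, G.IsStrongDomSet D ∧ w = G.domWeight D} = {0} := by
    refine Set.eq_singleton_iff_unique_mem.2 ⟨⟨_, isStrongDomSet_univ, (hweight _).symm⟩, ?_⟩
    rintro _ ⟨D, -, rfl⟩
    exact hweight D
  rw [gammaS, hset, csInf_singleton]

lemma gammaSnR_eq_zero (h : ∀ u v, ¬ G.StrongEdge u v) : G.gammaSnR = 0 := by
  have hweight : ∀ f, G.snrdfWeight f = 0 := fun f =>
    Finset.sum_eq_zero fun u _ => by rw [mus_eq_zero (h u), mul_zero]
  have hset : {w | ∃ f, G.IsSNRDF f ∧ w = G.snrdfWeight f} = {0} := by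
    refine Set.eq_singleton_iff_unique_mem.2 ⟨⟨_, IsSNRDF.one, (hweight _).symm⟩, ?_⟩
    rintro _ ⟨f, -, rfl⟩
    exact hweight f
  rw [gammaSnR, hset, csInf_singleton]

end Domination

end FuzzyGraph

/-- `γ_s(G) = γ_snR(G)` iff `G` has no strong edges. -/
theorem gammaS_eq_gammaSnR_iff_no_strongEdge {V : Type*} [Fintype V]
    (G : FuzzyGraph V) :
    G.gammaS = G.gammaSnR ↔ ∀ u v : V, ¬ G.StrongEdge u v := by
  refine ⟨fun heq u v huv => (G.gammaS_lt_gammaSnR huv).ne heq, fun h => ?_⟩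
  rw [G.gammaS_eq_zero h, G.gammaSnR_eq_zero h]
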